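/- No homeomorphism f : ℝ² → ℝ² can map two concentric circles (one inside the other) to two sets that are separated by a hyperplane (line): if C_1 is the circle of radius 1 and C_2 the circle of radius 2, both centered at the origin, then for any homeomorphism f of ℝ², f(C_1) and f(C_2) cannot lie in complementary open half-planes. -/
import Mathlib


open scoped RealInnerProductSpace

/-- no homeomorphism of `ℝ²` maps the two concentric circles of
radius `1` and `2` about the origin to sets lying in complementary open
half-planes determined by some line. -/
theorem no_homeomorph_separates_concentric_circles
    (f : EuclideanSpace ℝ (Fin 2) ≃ₜ EuclideanSpace ℝ (Fin 2)) :
    ¬ ∃ (w : EuclideanSpace ℝ (Fin 2)) (c : ℝ), w ≠ 0 ∧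
      (∀ x ∈ f '' (Metric.sphere (0 : EuclideanSpace ℝ (Fin 2)) 1), ⟪w, x⟫ < c) ∧
      (∀ x ∈ f '' (Metric.sphere (0 : EuclideanSpace ℝ (Fin 2)) 2), c < ⟪w, x⟫) := by
  rintro ⟨w, c, hw, h1, h2⟩
  set H : Set (EuclideanSpace ℝ (Fin 2)) := {y | ⟪w, y⟫ < c} with hHdef
  set U : Set (EuclideanSpace ℝ (Fin 2)) := f ⁻¹' H with hUdef
  -- H is convex, hence preconnected
  have hlin : IsLinearMap ℝ (fun y : EuclideanSpace ℝ (Fin 2) => ⟪w, y⟫) :=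
    ⟨fun x y => inner_add_right w x y, fun r x => real_inner_smul_right w x r⟩
  have hHconv : Convex ℝ H := convex_halfSpace_lt hlin c
  -- U is the image of H under f.symm, hence preconnected
  have himg : f.symm '' H = U := by
    ext x
    simp only [Set.mem_image, hUdef, Set.mem_preimage]
    constructor
    · rintro ⟨y, hy, rfl⟩; simpa using hy
    · intro hx; exact ⟨f x, hx, by simp⟩
  have hUconn : IsPreconnected U := by
    rw [← himg]
    exact (hHconv.isPreconnected).image _ f.symm.continuous.continuousOn
  -- the unit sphere lies in U
  have hwn : ‖w‖ ≠ 0 := norm_ne_zero_iff.mpr hw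
  have x0 : EuclideanSpace ℝ (Fin 2) := 0
  set a : EuclideanSpace ℝ (Fin 2) := (‖w‖⁻¹ : ℝ) • w with hadef
  have ha : ‖a‖ = 1 := by
    rw [hadef, norm_smul, norm_inv, norm_norm, inv_mul_cancel₀ hwn]
  have haU : a ∈ U := by
    have : a ∈ Metric.sphere (0 : EuclideanSpace ℝ (Fin 2)) 1 := by
      simp [mem_sphere_iff_norm, ha]
    exact h1 (f a) ⟨a, this, rfl⟩
  -- U is unbounded: there is a point of U of norm > 2
  obtain ⟨b, hbU, hb⟩ : ∃ b ∈ U, (2:ℝ) < ‖b‖ := by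
    have hK : IsCompact (f '' Metric.closedBall (0 : EuclideanSpace ℝ (Fin 2)) 2) :=
      (isCompact_closedBall _ _).image f.continuous
    obtain ⟨M, hM⟩ := hK.isBounded.subset_closedBall 0
    -- pick a point of H of norm > M
    set t : ℝ := min (c - 1) (-(M + 1) * ‖w‖) with htdef
    set p : EuclideanSpace ℝ (Fin 2) := (t / (‖w‖ ^ 2)) • w with hpdef
    have hip : ⟪w, p⟫ = t := by
      rw [hpdef, real_inner_smul_right, real_inner_self_eq_norm_sq]
      field_simp
    have hpH : p ∈ H := by
      have ht : t < c := lt_of_le_of_lt (min_le_left _ _) (by linarith)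
      show ⟪w, p⟫ < c
      rw [hip]; exact ht
    have hpn : M < ‖p‖ := by
      have ht : t ≤ -(M + 1) * ‖w‖ := min_le_right _ _
      have hwpos : (0:ℝ) < ‖w‖ := lt_of_le_of_ne (norm_nonneg w) (Ne.symm hwn)
      have hMn : (0:ℝ) ≤ M := by
        have := hM (Set.mem_image_of_mem f (Metric.mem_closedBall_self (by norm_num)))
        have := Metric.mem_closedBall.mp this
        nlinarith [dist_nonneg (x := f (0 : EuclideanSpace ℝ (Fin 2))) (y := (0 : EuclideanSpace ℝ (Fin 2)))]
      have htneg : t < 0 := lt_of_le_of_lt ht (by nlinarith)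
      have : ‖p‖ = |t| / ‖w‖ := by
        rw [hpdef, norm_smul, Real.norm_eq_abs, abs_div]
        rw [abs_of_nonneg (by positivity : (0:ℝ) ≤ ‖w‖ ^ 2)]
        field_simp
      rw [this, abs_of_neg htneg]
      rw [lt_div_iff₀ hwpos]
      nlinarith
    refine ⟨f.symm p, ?_, ?_⟩
    · simp [hUdef, hpH]
    · by_contra hle
      push_neg at hle
      have : f.symm p ∈ Metric.closedBall (0 : EuclideanSpace ℝ (Fin 2)) 2 := by
        simpa [Metric.mem_closedBall, dist_zero_right] using hle
      have : p ∈ f '' Metric.closedBall (0 : EuclideanSpace ℝ (Fin 2)) 2 :=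
        ⟨f.symm p, this, by simp⟩
      have := Metric.mem_closedBall.mp (hM this)
      rw [dist_zero_right] at this
      linarith [hpn]
  -- intermediate value: some point of U has norm 2
  obtain ⟨z, hzU, hz⟩ : ∃ z ∈ U, ‖z‖ = (2:ℝ) := by
    have := hUconn.intermediate_value₂ haU hbU
      (continuous_norm.continuousOn) (continuousOn_const (c := (2:ℝ)))
      (by rw [ha]; norm_num) (le_of_lt hb)
    exact this
  -- contradiction with the outer circle
  have hzS : z ∈ Metric.sphere (0 : EuclideanSpace ℝ (Fin 2)) 2 := by
    simp [mem_sphere_iff_norm, hz]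
  have h2' := h2 (f z) ⟨z, hzS, rfl⟩
  have h1' : ⟪w, f z⟫ < c := hzU
  linarith
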